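/- arXiv:1402.0644 — 3 statements merged into one kernel-verified Lean document; each statement's English description precedes it below -/
import Mathlib

section
/- For 0 < s ≤ t ≤ 1/2, the Wasserstein distance between lazy random walks satisfies W_1(μ_x^s, μ_{x'}^s) = (s/t)·W_1(μ_x^t, μ_{x'}^t) + (1 − s/t)·d(x,x'). Consequently κ^t(x,x') := 1 − W_1(μ_x^t, μ_{x'}^t)/d(x,x') is linear in t for t ≤ 1/2, i.e. κ^s = (s/t)κ^t. -/
/-!
Any coupling of `μ_x^a` and `μ_{x'}^a` keeps mass at least `1 - 2a` at `(x, x')`: the column of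
`x'` carries `1 - a`, and at most `a` of it lies off the row of `x`. Since
`μ_x^b = (b/a)·μ_x^a + (1 - b/a)·δ_x`, rescaling such a coupling by `b/a` and putting the remaining
`1 - b/a` at `(x, x')` gives, as long as `b ≤ 1/2`, a coupling of `μ_x^b` and `μ_{x'}^b` of cost
`(b/a)·c + (1 - b/a)·d(x,x')`. Applied in both directions, this shows that the transport costs at
time `s` are exactly the image of those at time `t` under an increasing affine map, which then
commutes with the infimum.
-/

open Classical Filter
noncomputable section

/-- A coupling (transference plan) between two measures on `V`, given as
nonnegative density functions. -/
def IsCoupling {V : Type*} (μ ν : V → ℝ) (ξ : V → V → ℝ) : Prop :=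
  (∀ y y', 0 ≤ ξ y y') ∧ (∀ y, ∑' y', ξ y y' = μ y) ∧ (∀ y', ∑' y, ξ y y' = ν y')

/-- The 1-Wasserstein distance between `μ` and `ν` for the cost function `ρ`. -/
def W1 {V : Type*} (ρ : V → V → ℝ) (μ ν : V → ℝ) : ℝ :=
  sInf {c | ∃ ξ, IsCoupling μ ν ξ ∧
    HasSum (fun p : V × V => ξ p.1 p.2 * ρ p.1 p.2) c}

/-- The shortest-path distance of a graph, as a real number. -/
def graphDist {V : Type*} (G : SimpleGraph V) (x y : V) : ℝ := G.dist x y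

/-- The degree of a vertex. -/
def deg {V : Type*} (G : SimpleGraph V) (x : V) : ℕ := Nat.card {y | G.Adj x y}

/-- The Dirac measure at `x`. -/
def dirac {V : Type*} (x : V) : V → ℝ := fun y => if y = x then 1 else 0

/-- The lazy random walk `μ_x^t = (1-t)·δ_x + t·(uniform measure on the neighbors of x)`. -/
def lazyWalk {V : Type*} (G : SimpleGraph V) (t : ℝ) (x y : V) : ℝ :=
  if y = x then 1 - t else if G.Adj x y then t / (deg G x) else 0

/-- The coarse Ricci curvature `κ^t(x,x') = 1 - W₁(μ_x^t, μ_{x'}^t)/d(x,x')`. -/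
def kappa {V : Type*} (G : SimpleGraph V) (t : ℝ) (x x' : V) : ℝ :=
  1 - W1 (graphDist G) (lazyWalk G t x) (lazyWalk G t x') / graphDist G x x'

def costSet {V : Type*} (ρ : V → V → ℝ) (μ ν : V → ℝ) : Set ℝ :=
  {c | ∃ ξ, IsCoupling μ ν ξ ∧ HasSum (fun p : V × V => ξ p.1 p.2 * ρ p.1 p.2) c}

theorem W1_eq_sInf_costSet {V : Type*} (ρ : V → V → ℝ) (μ ν : V → ℝ) :
    W1 ρ μ ν = sInf (costSet ρ μ ν) :=
  rfl

theorem bddBelow_costSet {V : Type*} {ρ : V → V → ℝ} (hρ : ∀ y y', 0 ≤ ρ y y') (μ ν : V → ℝ) :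
    BddBelow (costSet ρ μ ν) :=
  ⟨0, fun _ ⟨_, hξ, hc⟩ => hc.nonneg fun _ => mul_nonneg (hξ.1 _ _) (hρ _ _)⟩

theorem hasSum_dirac {V : Type*} (x : V) : HasSum (dirac x) 1 :=
  hasSum_ite_eq x 1

theorem dirac_prod_apply {V W : Type*} (x y : V) (x' y' : W) :
    dirac (x, x') (y, y') = dirac x y * dirac x' y' := by
  by_cases hy : y = x <;> by_cases hy' : y' = x' <;> simp [dirac, hy, hy']

theorem summable_of_summable_mul_of_one_le {ι : Type*} {f g : ι → ℝ} (hf : ∀ i, 0 ≤ f i)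
    {i₀ : ι} (hg : ∀ i ≠ i₀, 1 ≤ g i) (h : Summable fun i => f i * g i) : Summable f :=
  h.of_norm_bounded_eventually <| (eventually_cofinite_ne i₀).mono fun i hi => by
    rw [Real.norm_of_nonneg (hf i)]
    exact le_mul_of_one_le_right (hf i) (hg i hi)

theorem isCoupling_mul {V : Type*} {μ ν : V → ℝ} (hμ : ∀ y, 0 ≤ μ y) (hν : ∀ y, 0 ≤ ν y)
    (hμ1 : ∑' y, μ y = 1) (hν1 : ∑' y, ν y = 1) : IsCoupling μ ν fun y y' => μ y * ν y' :=
  ⟨fun y y' => mul_nonneg (hμ y) (hν y'), fun y => by rw [tsum_mul_left, hν1, mul_one],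
    fun y' => by rw [tsum_mul_right, hμ1, one_mul]⟩

theorem hasSum_cost_smul_add_dirac {V : Type*} {ξ ρ : V → V → ℝ} {c : ℝ}
    (hc : HasSum (fun p : V × V => ξ p.1 p.2 * ρ p.1 p.2) c) (r q : ℝ) (x x' : V) :
    HasSum (fun p : V × V => (r * ξ p.1 p.2 + q * dirac (x, x') (p.1, p.2)) * ρ p.1 p.2)
      (r * c + q * ρ x x') := by
  have hfun : (fun p : V × V => (r * ξ p.1 p.2 + q * dirac (x, x') (p.1, p.2)) * ρ p.1 p.2)
      = fun p => r * (ξ p.1 p.2 * ρ p.1 p.2) + if p = (x, x') then q * ρ x x' else 0 := by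
    funext p
    by_cases hp : p = (x, x') <;> simp only [dirac, hp, if_true, if_false] <;> ring
  rw [hfun]
  exact (hc.mul_left r).add (hasSum_ite_eq (x, x') (q * ρ x x'))

namespace IsCoupling

variable {V : Type*} {μ ν : V → ℝ} {ξ : V → V → ℝ}

theorem le_apply_add (hξ : IsCoupling μ ν ξ) (hrow : ∀ y, Summable (ξ y)) {x' : V}
    (hcol : Summable fun y => ξ y x') {m : ℝ} (hμ : HasSum μ m) (x : V) :
    ν x' ≤ ξ x x' + (m - μ x) := by
  obtain ⟨hnn, hμrow, hνcol⟩ := hξ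
  have hle : ∀ y, ξ y x' ≤ Function.update μ x (ξ x x') y := by
    intro y
    rcases eq_or_ne y x with rfl | hy
    · simp
    · rw [Function.update_of_ne hy, ← hμrow y]
      exact (hrow y).le_tsum x' fun j _ => hnn y j
  have := hasSum_le hle (hνcol x' ▸ hcol.hasSum) (hμ.update x (ξ x x'))
  linarith

theorem smul_add_dirac (hξ : IsCoupling μ ν ξ) (hrow : ∀ y, Summable (ξ y))
    (hcol : ∀ y', Summable fun y => ξ y y') {r q : ℝ} (hr : 0 ≤ r) {x x' : V}
    (hpos : 0 ≤ r * ξ x x' + q) :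
    IsCoupling (r • μ + q • dirac x) (r • ν + q • dirac x')
      (fun y y' => r * ξ y y' + q * dirac (x, x') (y, y')) := by
  obtain ⟨hnn, hμrow, hνcol⟩ := hξ
  refine ⟨fun y y' => ?_, fun y => ?_, fun y' => ?_⟩
  · by_cases h : (y, y') = (x, x')
    · obtain ⟨rfl, rfl⟩ := Prod.mk.inj h
      simpa [dirac] using hpos
    · simp only [dirac, if_neg h, mul_zero, add_zero]
      exact mul_nonneg hr (hnn y y')
  · have h := ((hrow y).hasSum.mul_left r).add
      (((hasSum_dirac x').mul_left (dirac x y)).mul_left q)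
    rw [hμrow y, mul_one] at h
    simpa only [dirac_prod_apply, Pi.add_apply, Pi.smul_apply, smul_eq_mul] using h.tsum_eq
  · have h := ((hcol y').hasSum.mul_left r).add
      (((hasSum_dirac x).mul_right (dirac x' y')).mul_left q)
    rw [hνcol y', one_mul] at h
    simpa only [dirac_prod_apply, Pi.add_apply, Pi.smul_apply, smul_eq_mul] using h.tsum_eq

end IsCoupling

section Graph

variable {V : Type*} {G : SimpleGraph V}

theorem graphDist_nonneg (G : SimpleGraph V) (y y' : V) : 0 ≤ graphDist G y y' :=
  Nat.cast_nonneg _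

theorem one_le_graphDist (hconn : G.Connected) {y y' : V} (h : y ≠ y') :
    1 ≤ graphDist G y y' :=
  Nat.one_le_cast.2 (hconn.pos_dist_of_ne h)

theorem deg_ne_zero (hconn : G.Connected) {x z : V} (hfin : (G.neighborSet x).Finite)
    (hxz : x ≠ z) : deg G x ≠ 0 := by
  have : Finite {y | G.Adj x y} := hfin.to_subtype
  have : Nonempty {y | G.Adj x y} :=
    ⟨⟨_, SimpleGraph.Walk.adj_snd (p := (hconn.preconnected x z).some)
      (SimpleGraph.Walk.not_nil_of_ne hxz)⟩⟩
  exact (Nat.card_pos_iff.2 ⟨‹_›, ‹_›⟩).ne'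

theorem summable_row_of_summable_cost (hconn : G.Connected) {ξ : V → V → ℝ}
    (hnn : ∀ y y', 0 ≤ ξ y y')
    (hc : Summable fun p : V × V => ξ p.1 p.2 * graphDist G p.1 p.2) (y : V) :
    Summable (ξ y) :=
  summable_of_summable_mul_of_one_le (hnn y) (fun _ h => one_le_graphDist hconn (Ne.symm h))
    (hc.comp_injective (Prod.mk_right_injective y))

theorem summable_col_of_summable_cost (hconn : G.Connected) {ξ : V → V → ℝ}
    (hnn : ∀ y y', 0 ≤ ξ y y')
    (hc : Summable fun p : V × V => ξ p.1 p.2 * graphDist G p.1 p.2) (y' : V) :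
    Summable fun y => ξ y y' :=
  summable_of_summable_mul_of_one_le (fun y => hnn y y') (fun _ h => one_le_graphDist hconn h)
    (hc.comp_injective (Prod.mk_left_injective y'))

theorem lazyWalk_self (G : SimpleGraph V) (t : ℝ) (x : V) : lazyWalk G t x x = 1 - t := by
  simp [lazyWalk]

theorem lazyWalk_nonneg {t : ℝ} (ht0 : 0 ≤ t) (ht1 : t ≤ 1) (x y : V) :
    0 ≤ lazyWalk G t x y := by
  unfold lazyWalk
  split_ifs
  · linarith
  · positivity
  · rfl

theorem support_lazyWalk_subset (G : SimpleGraph V) (t : ℝ) (x : V) :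
    Function.support (lazyWalk G t x) ⊆ insert x (G.neighborSet x) := by
  intro y hy
  by_contra h
  simp only [Set.mem_insert_iff, SimpleGraph.mem_neighborSet, not_or] at h
  simp [lazyWalk, h.1, h.2] at hy

theorem hasSum_lazyWalk {x : V} (hfin : (G.neighborSet x).Finite) (hdeg : deg G x ≠ 0)
    (t : ℝ) : HasSum (lazyWalk G t x) 1 := by
  have hdeg_eq : (deg G x : ℝ) = hfin.toFinset.card := by
    rw [deg, ← Set.ncard_eq_toFinset_card _ hfin, ← Nat.card_coe_set_eq]
    rfl
  have hx : x ∉ hfin.toFinset := by simp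
  have hnbr : ∀ y ∈ hfin.toFinset, lazyWalk G t x y = t / deg G x := fun y hy => by
    rw [Set.Finite.mem_toFinset, SimpleGraph.mem_neighborSet] at hy
    simp [lazyWalk, hy.ne', hy]
  have hsum : ∑ y ∈ insert x hfin.toFinset, lazyWalk G t x y = 1 := by
    rw [Finset.sum_insert hx, lazyWalk_self, Finset.sum_congr rfl hnbr, Finset.sum_const,
      nsmul_eq_mul, ← hdeg_eq]
    field_simp [Nat.cast_ne_zero.2 hdeg]
    ring
  exact hsum ▸ hasSum_sum_of_ne_finset_zero fun y hy =>
    Function.notMem_support.1 fun h => hy (by simpa using support_lazyWalk_subset G t x h)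

theorem lazyWalk_eq_smul_add_dirac {a : ℝ} (ha : a ≠ 0) (G : SimpleGraph V) (b : ℝ) (x : V) :
    lazyWalk G b x = (b / a) • lazyWalk G a x + (1 - b / a) • dirac x := by
  funext y
  simp only [lazyWalk, dirac, Pi.add_apply, Pi.smul_apply, smul_eq_mul]
  split_ifs <;> field_simp <;> ring

variable {x x' : V}

theorem costSet_lazyWalk_nonempty (hconn : G.Connected) (hx : (G.neighborSet x).Finite)
    (hx' : (G.neighborSet x').Finite) (hne : x ≠ x') {a : ℝ} (ha0 : 0 ≤ a) (ha1 : a ≤ 1) :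
    (costSet (graphDist G) (lazyWalk G a x) (lazyWalk G a x')).Nonempty := by
  have hcoupling := isCoupling_mul (lazyWalk_nonneg ha0 ha1 x) (lazyWalk_nonneg ha0 ha1 x')
    (hasSum_lazyWalk hx (deg_ne_zero hconn hx hne) a).tsum_eq
    (hasSum_lazyWalk hx' (deg_ne_zero hconn hx' hne.symm) a).tsum_eq
  refine ⟨_, _, hcoupling, (summable_of_hasFiniteSupport ?_).hasSum⟩
  refine ((hx.insert x).prod (hx'.insert x')).subset fun p hp => ?_
  have hp' := Function.mem_support.1 hp
  exact ⟨support_lazyWalk_subset G a x (left_ne_zero_of_mul (left_ne_zero_of_mul hp')),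
    support_lazyWalk_subset G a x' (right_ne_zero_of_mul (left_ne_zero_of_mul hp'))⟩

theorem scaled_cost_mem_costSet_lazyWalk (hconn : G.Connected) (hx : (G.neighborSet x).Finite)
    (hne : x ≠ x') {a b c : ℝ} (ha : 0 < a) (hb0 : 0 ≤ b) (hb : b ≤ 1 / 2)
    (hc : c ∈ costSet (graphDist G) (lazyWalk G a x) (lazyWalk G a x')) :
    b / a * c + (1 - b / a) * graphDist G x x' ∈
      costSet (graphDist G) (lazyWalk G b x) (lazyWalk G b x') := by
  obtain ⟨ξ, hξ, hcost⟩ := hc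
  have hrow := summable_row_of_summable_cost hconn hξ.1 hcost.summable
  have hcol := summable_col_of_summable_cost hconn hξ.1 hcost.summable
  have hdiag : 1 - 2 * a ≤ ξ x x' := by
    have := hξ.le_apply_add hrow (hcol x') (hasSum_lazyWalk hx (deg_ne_zero hconn hx hne) a) x
    rw [lazyWalk_self, lazyWalk_self] at this
    linarith
  have hpos : 0 ≤ b / a * ξ x x' + (1 - b / a) := by
    have hdefect : b / a * (1 - 2 * a) + (1 - b / a) = 1 - 2 * b := by
      field_simp
      ring
    nlinarith [mul_le_mul_of_nonneg_left hdiag (div_nonneg hb0 ha.le)]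
  rw [lazyWalk_eq_smul_add_dirac ha.ne' G b x, lazyWalk_eq_smul_add_dirac ha.ne' G b x']
  exact ⟨_, hξ.smul_add_dirac hrow hcol (div_nonneg hb0 ha.le) hpos,
    hasSum_cost_smul_add_dirac hcost _ _ x x'⟩

theorem costSet_lazyWalk_eq_image (hconn : G.Connected) (hx : (G.neighborSet x).Finite)
    (hne : x ≠ x') {s t : ℝ} (hs : 0 < s) (ht : 0 < t) (hs2 : s ≤ 1 / 2) (ht2 : t ≤ 1 / 2) :
    costSet (graphDist G) (lazyWalk G s x) (lazyWalk G s x') =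
      (fun c => s / t * c + (1 - s / t) * graphDist G x x') ''
        costSet (graphDist G) (lazyWalk G t x) (lazyWalk G t x') := by
  refine Set.Subset.antisymm (fun c hc => ⟨_,
    scaled_cost_mem_costSet_lazyWalk hconn hx hne hs ht.le ht2 hc, ?_⟩) ?_
  · field_simp
    ring
  · rintro _ ⟨c, hc, rfl⟩
    exact scaled_cost_mem_costSet_lazyWalk hconn hx hne ht hs.le hs2 hc

theorem W1_lazyWalk_eq (hconn : G.Connected) (hx : (G.neighborSet x).Finite)
    (hx' : (G.neighborSet x').Finite) (hne : x ≠ x') {s t : ℝ} (hs : 0 < s) (ht : 0 < t)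
    (hs2 : s ≤ 1 / 2) (ht2 : t ≤ 1 / 2) :
    W1 (graphDist G) (lazyWalk G s x) (lazyWalk G s x') =
      s / t * W1 (graphDist G) (lazyWalk G t x) (lazyWalk G t x')
        + (1 - s / t) * graphDist G x x' := by
  rw [W1_eq_sInf_costSet, W1_eq_sInf_costSet, costSet_lazyWalk_eq_image hconn hx hne hs ht hs2 ht2]
  have hmono : Monotone fun c => s / t * c + (1 - s / t) * graphDist G x x' := fun c c' h => by
    dsimp only
    gcongr
  exact (hmono.map_csInf_of_continuousAt (by fun_prop)
    (costSet_lazyWalk_nonempty hconn hx hx' hne ht.le (by linarith))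
    (bddBelow_costSet (graphDist_nonneg G) _ _)).symm

end Graph

/-- for `0 < s ≤ t ≤ 1/2`, the Wasserstein distance between lazy
random walks interpolates linearly, and hence `κ^t` is linear in `t`. -/
theorem W1_scaling_and_kappa_linear {V : Type*} (G : SimpleGraph V)
    (hconn : G.Connected) (hfin : ∀ v, (G.neighborSet v).Finite)
    (x x' : V) (hne : x ≠ x') (s t : ℝ) (hs : 0 < s) (hst : s ≤ t) (ht : t ≤ 1/2) :
    W1 (graphDist G) (lazyWalk G s x) (lazyWalk G s x')
      = (s/t) * W1 (graphDist G) (lazyWalk G t x) (lazyWalk G t x')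
        + (1 - s/t) * graphDist G x x' ∧
    kappa G s x x' = (s/t) * kappa G t x x' := by
  have hW := W1_lazyWalk_eq hconn (hfin x) (hfin x') hne hs (hs.trans_le hst) (hst.trans ht) ht
  refine ⟨hW, ?_⟩
  have hd : graphDist G x x' ≠ 0 := (zero_lt_one.trans_le (one_le_graphDist hconn hne)).ne'
  rw [kappa, kappa, hW]
  field_simp
  ring
end
end

section
/- (Discrete Myers theorem) If the Ollivier–Ricci curvature ric of a locally finite graph satisfies ric(x,y) ≥ ρ > 0 for all edges (x,y), then the graph is finite and its diameter is at most 2/ρ. -/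
open Classical Filter
noncomputable section

/-!
Fix `x` and let `F v` be the expected distance to `x` after one lazy step from `v`. Testing a
coupling of `μ_a^t, μ_b^t` against the `1`-Lipschitz function `d(x, ·)` gives
`F b - F a ≤ W₁(μ_a^t, μ_b^t) = 1 - κ^t(a, b)` on every edge. Summing along a geodesic
`x = v₀, …, vₙ = y`, and using that a lazy step moves by `t` on average (so `F x = t` and
`F y ≥ n - t`), yields `∑ κ^t(vᵢ, vᵢ₊₁) ≤ 2t`. Dividing by `t` and letting `t → 0` gives
`n ρ ≤ ∑ ric(vᵢ, vᵢ₊₁) ≤ 2`. Bounded distances in a connected, locally finite graph force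
finiteness.
-/

open Finset

section Coupling

variable {V : Type*} {μ ν : V → ℝ} {ξ : V → V → ℝ} {d : V → V → ℝ}

structure IsProbOn (μ : V → ℝ) (s : Finset V) : Prop where
  nonneg : ∀ a, 0 ≤ μ a
  eq_zero_of_notMem : ∀ a ∉ s, μ a = 0
  sum_eq_one : ∑ a ∈ s, μ a = 1

lemma IsCoupling.symm (hξ : IsCoupling μ ν ξ) : IsCoupling ν μ (flip ξ) :=
  ⟨fun a b => hξ.1 b a, hξ.2.2, hξ.2.1⟩

/- `IsCoupling` only constrains the marginals through `tsum`, which is junk on non-summable rows;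
a summable cost which is at least `1` off the diagonal makes the rows summable. -/
lemma IsCoupling.apply_le_left (hd : ∀ a b, a ≠ b → 1 ≤ d a b) (hξ : IsCoupling μ ν ξ)
    (hc : Summable fun p : V × V => ξ p.1 p.2 * d p.1 p.2) (a b : V) : ξ a b ≤ μ a := by
  have hcost_row : Summable fun b => ξ a b * d a b := hc.comp_injective (Prod.mk_right_injective a)
  have hrow : Summable fun b => ξ a b := by
    refine (hcost_row.update a (ξ a a)).of_nonneg_of_le (hξ.1 a) fun b => ?_
    rcases eq_or_ne b a with rfl | hb
    · simp
    · rw [Function.update_of_ne hb]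
      exact le_mul_of_one_le_right (hξ.1 a b) (hd a b hb.symm)
  rw [← hξ.2.1 a]
  exact hrow.le_tsum b fun c _ => hξ.1 a c

lemma IsCoupling.apply_le_right (hd : ∀ a b, a ≠ b → 1 ≤ d a b) (hξ : IsCoupling μ ν ξ)
    (hc : Summable fun p : V × V => ξ p.1 p.2 * d p.1 p.2) (a b : V) : ξ a b ≤ ν b :=
  hξ.symm.apply_le_left (d := flip d) (fun a b hab => hd b a hab.symm)
    (hc.comp_injective Prod.swap_injective) b a

/-- The easy half of Kantorovich–Rubinstein duality, for a single coupling. -/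
lemma IsCoupling.sub_le_cost {s u : Finset V} {c : ℝ} {f : V → ℝ}
    (hd : ∀ a b, a ≠ b → 1 ≤ d a b) (hμ : ∀ a ∉ s, μ a = 0) (hν : ∀ b ∉ u, ν b = 0)
    (hξ : IsCoupling μ ν ξ) (hc : HasSum (fun p : V × V => ξ p.1 p.2 * d p.1 p.2) c)
    (hf : ∀ a b, f b - f a ≤ d a b) :
    ∑ b ∈ u, ν b * f b - ∑ a ∈ s, μ a * f a ≤ c := by
  have hleft (a b) (ha : a ∉ s) : ξ a b = 0 :=
    le_antisymm ((hξ.apply_le_left hd hc.summable a b).trans_eq (hμ a ha)) (hξ.1 a b)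
  have hright (a b) (hb : b ∉ u) : ξ a b = 0 :=
    le_antisymm ((hξ.apply_le_right hd hc.summable a b).trans_eq (hν b hb)) (hξ.1 a b)
  have hrow (a) : ∑ b ∈ u, ξ a b = μ a := by
    rw [← hξ.2.1 a, tsum_eq_sum fun b hb => hright a b hb]
  have hcol (b) : ∑ a ∈ s, ξ a b = ν b := by
    rw [← hξ.2.2 b, tsum_eq_sum fun a ha => hleft a b ha]
  have hcost : c = ∑ p ∈ s ×ˢ u, ξ p.1 p.2 * d p.1 p.2 := by
    refine hc.unique (hasSum_sum_of_ne_finset_zero fun p hp => ?_)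
    rcases not_and_or.mp (mem_product.not.mp hp) with ha | hb
    · rw [hleft _ _ ha, zero_mul]
    · rw [hright _ _ hb, zero_mul]
  calc ∑ b ∈ u, ν b * f b - ∑ a ∈ s, μ a * f a
      = ∑ p ∈ s ×ˢ u, ξ p.1 p.2 * (f p.2 - f p.1) := by
        simp only [← hrow, ← hcol, sum_mul, mul_sub, sum_sub_distrib, sum_product]
        rw [sum_comm]
    _ ≤ ∑ p ∈ s ×ˢ u, ξ p.1 p.2 * d p.1 p.2 :=
        sum_le_sum fun p _ => mul_le_mul_of_nonneg_left (hf _ _) (hξ.1 _ _)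
    _ = c := hcost.symm

lemma IsProbOn.isCoupling_mul {s u : Finset V} (hμ : IsProbOn μ s) (hν : IsProbOn ν u) :
    IsCoupling μ ν fun a b => μ a * ν b := by
  refine ⟨fun a b => mul_nonneg (hμ.nonneg a) (hν.nonneg b), fun a => ?_, fun b => ?_⟩
  · rw [tsum_mul_left, tsum_eq_sum hν.eq_zero_of_notMem, hν.sum_eq_one, mul_one]
  · rw [tsum_mul_right, tsum_eq_sum hμ.eq_zero_of_notMem, hμ.sum_eq_one, one_mul]

lemma sub_le_W1 {s u : Finset V} {f : V → ℝ} (hd : ∀ a b, a ≠ b → 1 ≤ d a b)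
    (hμ : IsProbOn μ s) (hν : IsProbOn ν u) (hf : ∀ a b, f b - f a ≤ d a b) :
    ∑ b ∈ u, ν b * f b - ∑ a ∈ s, μ a * f a ≤ W1 d μ ν := by
  have hprod : HasSum (fun p : V × V => μ p.1 * ν p.2 * d p.1 p.2)
      (∑ p ∈ s ×ˢ u, μ p.1 * ν p.2 * d p.1 p.2) := by
    refine hasSum_sum_of_ne_finset_zero fun p hp => ?_
    rcases not_and_or.mp (mem_product.not.mp hp) with ha | hb
    · rw [hμ.eq_zero_of_notMem _ ha, zero_mul, zero_mul]
    · rw [hν.eq_zero_of_notMem _ hb, mul_zero, zero_mul]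
  refine le_csInf ⟨_, _, hμ.isCoupling_mul hν, hprod⟩ ?_
  rintro c ⟨ξ, hξ, hc⟩
  exact hξ.sub_le_cost hd hμ.eq_zero_of_notMem hν.eq_zero_of_notMem hc hf

end Coupling

namespace SimpleGraph

variable {V : Type*} {G : SimpleGraph V}

lemma graphDist_of_adj {a b : V} (h : G.Adj a b) : graphDist G a b = 1 := by
  simp [graphDist, dist_eq_one_iff_adj.mpr h]

lemma graphDist_comm (G : SimpleGraph V) (a b : V) : graphDist G a b = graphDist G b a := by
  rw [graphDist, graphDist, dist_comm]

lemma Connected.one_le_graphDist (hconn : G.Connected) {a b : V} (h : a ≠ b) :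
    1 ≤ graphDist G a b :=
  Nat.one_le_cast.mpr (hconn.pos_dist_of_ne h)

lemma Connected.graphDist_sub_graphDist_le (hconn : G.Connected) (x a b : V) :
    graphDist G x b - graphDist G x a ≤ graphDist G a b :=
  sub_le_iff_le_add'.mpr (by unfold graphDist; exact_mod_cast hconn.dist_triangle)

lemma kappa_of_adj {t : ℝ} {a b : V} (h : G.Adj a b) :
    kappa G t a b = 1 - W1 (graphDist G) (lazyWalk G t a) (lazyWalk G t b) := by
  rw [kappa, graphDist_of_adj h, div_one]

section LazyWalk

variable [G.LocallyFinite] {t : ℝ}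

lemma deg_eq_degree (x : V) : deg G x = G.degree x := by
  rw [deg, ← card_neighborSet_eq_degree, ← Nat.card_eq_fintype_card]
  rfl

lemma lazyWalk_of_adj {x a : V} (h : G.Adj x a) : lazyWalk G t x a = t / G.degree x := by
  rw [lazyWalk, if_neg h.ne', if_pos h, deg_eq_degree]

lemma sum_neighborFinset_lazyWalk_mul {x : V} (hx : 0 < G.degree x) {f : V → ℝ}
    (hf : ∀ a, G.Adj x a → f a = 1) :
    ∑ a ∈ G.neighborFinset x, lazyWalk G t x a * f a = t := by
  rw [sum_congr rfl fun a ha => by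
    rw [lazyWalk_of_adj ((mem_neighborFinset G x a).mp ha), hf a ((mem_neighborFinset G x a).mp ha),
      mul_one],
    sum_const, card_neighborFinset_eq_degree, nsmul_eq_mul]
  field_simp

lemma isProbOn_lazyWalk (ht0 : 0 ≤ t) (ht1 : t ≤ 1) {x : V} (hx : 0 < G.degree x) :
    IsProbOn (lazyWalk G t x) (insert x (G.neighborFinset x)) where
  nonneg a := by
    unfold lazyWalk
    split_ifs <;> [linarith; positivity; exact le_rfl]
  eq_zero_of_notMem a ha := by
    rw [mem_insert, mem_neighborFinset, not_or] at ha
    rw [lazyWalk, if_neg ha.1, if_neg ha.2]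
  sum_eq_one := by
    have := sum_neighborFinset_lazyWalk_mul (t := t) hx (f := fun _ => 1) fun _ _ => rfl
    simp only [mul_one] at this
    rw [sum_insert (notMem_neighborFinset_self G x), this, lazyWalk, if_pos rfl]
    ring

/-- The jump `W₁(δ_x, μ_x^t) = t`. -/
lemma sum_lazyWalk_mul_graphDist {x : V} (hx : 0 < G.degree x) :
    ∑ a ∈ insert x (G.neighborFinset x), lazyWalk G t x a * graphDist G x a = t := by
  rw [sum_insert (notMem_neighborFinset_self G x),
    sum_neighborFinset_lazyWalk_mul hx fun a h => graphDist_of_adj h]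
  simp [graphDist]

variable (G) in
def lazyMeanDist (t : ℝ) (x v : V) : ℝ :=
  ∑ b ∈ insert v (G.neighborFinset v), lazyWalk G t v b * graphDist G x b

lemma Connected.graphDist_sub_le_lazyMeanDist (hconn : G.Connected) (ht0 : 0 ≤ t) (ht1 : t ≤ 1)
    (x : V) {y : V} (hy : 0 < G.degree y) : graphDist G x y - t ≤ lazyMeanDist G t x y := by
  have hμ := isProbOn_lazyWalk ht0 ht1 hy
  calc graphDist G x y - t
      = ∑ b ∈ insert y (G.neighborFinset y),
          lazyWalk G t y b * (graphDist G x y - graphDist G y b) := by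
        simp only [mul_sub, sum_sub_distrib, ← sum_mul, hμ.sum_eq_one, one_mul,
          sum_lazyWalk_mul_graphDist hy]
    _ ≤ lazyMeanDist G t x y := sum_le_sum fun b _ => mul_le_mul_of_nonneg_left
        (by linarith [hconn.graphDist_sub_graphDist_le x b y, graphDist_comm G y b]) (hμ.nonneg b)

lemma Connected.lazyMeanDist_sub_le_W1 (hconn : G.Connected) (ht0 : 0 ≤ t) (ht1 : t ≤ 1)
    (x : V) {a b : V} (h : G.Adj a b) :
    lazyMeanDist G t x b - lazyMeanDist G t x a ≤
      W1 (graphDist G) (lazyWalk G t a) (lazyWalk G t b) :=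
  sub_le_W1 (fun _ _ => hconn.one_le_graphDist) (isProbOn_lazyWalk ht0 ht1 h.degree_pos_left)
    (isProbOn_lazyWalk ht0 ht1 h.degree_pos_right) (hconn.graphDist_sub_graphDist_le x)

lemma Connected.sum_kappa_getVert_le (hconn : G.Connected) {x y : V} (hxy : x ≠ y)
    (p : G.Walk x y) (hp : p.length = G.dist x y) (ht0 : 0 ≤ t) (ht1 : t ≤ 1) :
    ∑ i ∈ range p.length, kappa G t (p.getVert i) (p.getVert (i + 1)) ≤ 2 * t := by
  have := nontrivial_of_ne x y hxy
  have hstep : ∀ i ∈ range p.length,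
      lazyMeanDist G t x (p.getVert (i + 1)) - lazyMeanDist G t x (p.getVert i) ≤
        1 - kappa G t (p.getVert i) (p.getVert (i + 1)) := fun i hi => by
    have hadj := p.adj_getVert_succ (mem_range.mp hi)
    rw [kappa_of_adj hadj, sub_sub_cancel]
    exact hconn.lazyMeanDist_sub_le_W1 ht0 ht1 x hadj
  have hx : lazyMeanDist G t x x = t :=
    sum_lazyWalk_mul_graphDist (hconn.preconnected.degree_pos_of_nontrivial x)
  have hy := hconn.graphDist_sub_le_lazyMeanDist ht0 ht1 x
    (hconn.preconnected.degree_pos_of_nontrivial y)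
  have htele := sum_le_sum hstep
  rw [sum_range_sub (fun i => lazyMeanDist G t x (p.getVert i)), p.getVert_length,
    p.getVert_zero, hx, sum_sub_distrib, sum_const, card_range, nsmul_one] at htele
  rw [graphDist, ← hp] at hy
  linarith

end LazyWalk

variable (G) in
lemma finite_setOf_exists_walk_length_le [G.LocallyFinite] (x : V) (m : ℕ) :
    {v | ∃ p : G.Walk v x, p.length ≤ m}.Finite := by
  induction m with
  | zero =>
    refine (Set.finite_singleton x).subset ?_
    rintro v ⟨p, hp⟩
    exact Walk.eq_of_length_eq_zero (Nat.le_zero.mp hp)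
  | succ m ih =>
    refine ((ih.biUnion fun u _ => (G.neighborSet u).toFinite).insert x).subset ?_
    rintro v ⟨_ | ⟨h, q⟩, hp⟩
    · exact Set.mem_insert _ _
    · refine Set.mem_insert_of_mem _ (Set.mem_iUnion₂.mpr ⟨_, ⟨q, ?_⟩, h.symm⟩)
      simpa [Walk.length_cons] using hp

lemma Connected.mul_dist_le_two [G.LocallyFinite] (hconn : G.Connected) {ρ : ℝ} {ric : V → V → ℝ}
    (hric : ∀ x y, G.Adj x y → Tendsto (fun t => kappa G t x y / t)
      (nhdsWithin 0 (Set.Ioi 0)) (nhds (ric x y)))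
    (hlow : ∀ x y, G.Adj x y → ρ ≤ ric x y) (x y : V) : ρ * G.dist x y ≤ 2 := by
  rcases eq_or_ne x y with rfl | hxy
  · simp
  obtain ⟨p, hp⟩ := hconn.exists_walk_length_eq_dist x y
  have hadj (i) (hi : i ∈ range p.length) := p.adj_getVert_succ (mem_range.mp hi)
  have hlim := tendsto_finsetSum (range p.length) fun i hi => hric _ _ (hadj i hi)
  have hsum : ∑ i ∈ range p.length, ric (p.getVert i) (p.getVert (i + 1)) ≤ 2 := by
    refine le_of_tendsto hlim (Filter.mem_of_superset (Ioo_mem_nhdsGT one_pos) ?_)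
    rintro t ⟨ht0, ht1⟩
    rw [Set.mem_ofPred_eq, ← sum_div, div_le_iff₀ ht0]
    exact hconn.sum_kappa_getVert_le hxy p hp ht0.le ht1.le
  calc ρ * G.dist x y = ∑ i ∈ range p.length, ρ := by simp [hp, mul_comm]
    _ ≤ _ := sum_le_sum fun i hi => hlow _ _ (hadj i hi)
    _ ≤ 2 := hsum

end SimpleGraph

/-- discrete Myers theorem: if the Ollivier–Ricci curvature of
every edge is at least `ρ > 0`, then the graph is finite and its diameter is at
most `2/ρ`. -/
theorem discrete_myers {V : Type*} (G : SimpleGraph V) (hconn : G.Connected)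
    (hfin : ∀ v, (G.neighborSet v).Finite) (ρ : ℝ) (hρ : 0 < ρ)
    (ric : V → V → ℝ)
    (hric : ∀ x y, G.Adj x y → Filter.Tendsto (fun t => kappa G t x y / t)
      (nhdsWithin 0 (Set.Ioi 0)) (nhds (ric x y)))
    (hlow : ∀ x y, G.Adj x y → ρ ≤ ric x y) :
    Finite V ∧ ∀ x y : V, (G.dist x y : ℝ) ≤ 2 / ρ := by
  let : G.LocallyFinite := fun v => (hfin v).fintype
  have hdiam (x y : V) : (G.dist x y : ℝ) ≤ 2 / ρ := by
    rw [le_div_iff₀ hρ, mul_comm]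
    exact hconn.mul_dist_le_two hric hlow x y
  refine ⟨?_, hdiam⟩
  obtain ⟨x₀⟩ := hconn.nonempty
  refine Set.finite_univ_iff.mp ((G.finite_setOf_exists_walk_length_le x₀ ⌊2 / ρ⌋₊).subset ?_)
  intro v _
  obtain ⟨p, hp⟩ := hconn.exists_walk_length_eq_dist v x₀
  exact ⟨p, hp.trans_le (Nat.le_floor (hdiam v x₀))⟩
end
end

section
/- On the graph of the cube (3-regular, girth 4), the Ollivier–Ricci curvature of every edge equals 2/3, and this is sharp for the discrete Myers theorem: the diameter of the cube graph equals 3 = 2/(2/3). -/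
open Classical Filter
noncomputable section

/-- The 1-skeleton of the cube: vertices are `{0,1}³`, adjacent iff they differ
in exactly one coordinate. -/
def cubeGraph : SimpleGraph (Fin 3 → Bool) where
  Adj u v := ∃ i, u i ≠ v i ∧ ∀ j, j ≠ i → u j = v j
  symm := by
    constructor
    rintro u v ⟨i, hi, h⟩
    exact ⟨i, hi.symm, fun j hj => (h j hj).symm⟩
  loopless := by constructor; rintro u ⟨i, hi, -⟩; exact hi rfl


/-!
For an edge `x x'` and small `t`, `W₁(μ_x^t, μ_{x'}^t) = 1 - 2t/3` exactly, so
`κ^t(x,x') = 2t/3` and `κ^t/t` is constant near `0`. The upper bound is an explicit coupling: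
`x` and `x'` keep mass `t/3` in place, each of the two other neighbours `y` of `x` is moved
across the square `x y y' x'` to `y'`, and the remaining mass of `x` goes to `x'`. The lower
bound is the 1-Lipschitz potential `d(·, x')`, whose integrals against the two measures differ
by the same amount. Graph distance on the cube is Hamming distance, which also gives the
diameter.
-/

open Finset

section Transport

variable {V : Type*} [Fintype V]

def transportCost (ρ ξ : V → V → ℝ) : ℝ := ∑ p : V × V, ξ p.1 p.2 * ρ p.1 p.2

namespace IsCoupling

variable {μ ν : V → ℝ} {ξ : V → V → ℝ}

lemma sum_right (h : IsCoupling μ ν ξ) (y : V) : ∑ y', ξ y y' = μ y := by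
  simpa [tsum_fintype] using h.2.1 y

lemma sum_left (h : IsCoupling μ ν ξ) (y' : V) : ∑ y, ξ y y' = ν y' := by
  simpa [tsum_fintype] using h.2.2 y'

lemma sum_mul_sub_sum_mul_le_transportCost (h : IsCoupling μ ν ξ) {ρ : V → V → ℝ}
    {f : V → ℝ} (hf : ∀ y y', f y - f y' ≤ ρ y y') :
    ∑ y, f y * μ y - ∑ y, f y * ν y ≤ transportCost ρ ξ := calc
  _ = ∑ p : V × V, ξ p.1 p.2 * (f p.1 - f p.2) := by
    simp only [Fintype.sum_prod_type, mul_sub, sum_sub_distrib]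
    congr 1
    · simp only [← h.sum_right, mul_sum, mul_comm]
    · simp only [← h.sum_left, mul_sum, mul_comm]
      exact sum_comm
  _ ≤ _ := sum_le_sum fun p _ => mul_le_mul_of_nonneg_left (hf _ _) (h.1 _ _)

end IsCoupling

/-- Weak Kantorovich duality. -/
theorem W1_eq_transportCost {ρ : V → V → ℝ} {μ ν f : V → ℝ} {ξ : V → V → ℝ}
    (hξ : IsCoupling μ ν ξ) (hf : ∀ y y', f y - f y' ≤ ρ y y')
    (hcost : transportCost ρ ξ = ∑ y, f y * μ y - ∑ y, f y * ν y) :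
    W1 ρ μ ν = transportCost ρ ξ := by
  refine IsLeast.csInf_eq ⟨⟨ξ, hξ, hasSum_fintype _⟩, ?_⟩
  rintro c ⟨η, hη, hc⟩
  rw [hc.unique (hasSum_fintype _), hcost]
  exact hη.sum_mul_sub_sum_mul_le_transportCost hf

end Transport

section Hamming

variable {ι : Type*} [Fintype ι] {β : ι → Type*} [∀ i, DecidableEq (β i)]

lemma hammingDist_update_self [DecidableEq ι] (u : ∀ i, β i) {i : ι} {a : β i}
    (ha : u i ≠ a) :
    hammingDist u (Function.update u i a) = 1 := by
  rw [hammingDist, card_eq_one]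
  refine ⟨i, eq_singleton_iff_unique_mem.2 ⟨by simpa using ha, fun j hj => ?_⟩⟩
  by_contra hji
  simp [Function.update_of_ne hji] at hj

lemma hammingDist_update_add_one [DecidableEq ι] {u v : ∀ i, β i} {i : ι} (h : u i ≠ v i) :
    hammingDist (Function.update u i (v i)) v + 1 = hammingDist u v := by
  have : ({j | Function.update u i (v i) j ≠ v j} : Finset ι) =
      ({j | u j ≠ v j} : Finset ι).erase i := by
    ext j
    by_cases hji : j = i
    · subst hji; simp
    · simp [hji]
  rw [hammingDist, hammingDist, this, card_erase_add_one (by simpa using h)]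

namespace SimpleGraph

variable {G : SimpleGraph (∀ i, β i)}

lemma Walk.hammingDist_le_length (hG : ∀ u v, G.Adj u v ↔ hammingDist u v = 1)
    {u v : ∀ i, β i} (p : G.Walk u v) : hammingDist u v ≤ p.length := by
  induction p with
  | nil => simp
  | @cons a b c hab p ih =>
    calc hammingDist a c ≤ hammingDist a b + hammingDist b c := hammingDist_triangle a b c
      _ ≤ p.length + 1 := by rw [(hG a b).1 hab]; omega
      _ = _ := (length_cons hab p).symm

lemma exists_walk_length_eq_hammingDist [DecidableEq ι]
    (hG : ∀ u v, G.Adj u v ↔ hammingDist u v = 1) (u v : ∀ i, β i) :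
    ∃ p : G.Walk u v, p.length = hammingDist u v := by
  induction h : hammingDist u v generalizing u with
  | zero =>
    obtain rfl := hammingDist_eq_zero.1 h
    exact ⟨.nil, rfl⟩
  | succ n ih =>
    obtain ⟨i, hi⟩ : ∃ i, u i ≠ v i := by
      by_contra! huv
      simp [funext huv] at h
    obtain ⟨p, hp⟩ :=
      ih (Function.update u i (v i)) (by have := hammingDist_update_add_one hi; omega)
    exact ⟨.cons ((hG _ _).2 (hammingDist_update_self u hi)) p, by simp [hp]⟩

theorem dist_eq_hammingDist (hG : ∀ u v, G.Adj u v ↔ hammingDist u v = 1) (u v : ∀ i, β i) :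
    G.dist u v = hammingDist u v := by
  classical
  obtain ⟨p, hp⟩ := exists_walk_length_eq_hammingDist hG u v
  obtain ⟨q, hq⟩ := Reachable.exists_walk_length_eq_dist ⟨p⟩
  exact le_antisymm (hp ▸ dist_le p) (hq ▸ q.hammingDist_le_length hG)

end SimpleGraph

end Hamming

section LazyWalk

variable {V : Type*} {G : SimpleGraph V}

lemma deg_eq_degree [Fintype V] [DecidableRel G.Adj] (x : V) : deg G x = G.degree x := by
  rw [deg, ← SimpleGraph.card_neighborSet_eq_degree, ← Nat.card_eq_fintype_card]
  rfl

lemma lazyWalk_eq_of_deg_eq [DecidableEq V] [DecidableRel G.Adj] {t : ℝ} {d : ℕ} {x : V}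
    (hx : deg G x = d) (y : V) :
    lazyWalk G t x y = (if y = x then 1 - t - t / d else 0) +
      if y = x ∨ G.Adj x y then t / d else 0 := by
  by_cases hy : y = x
  · subst hy; simp [lazyWalk]
  · simp [lazyWalk, hy, hx]

variable [Fintype V] [DecidableEq V] [DecidableRel G.Adj]

lemma sum_mul_lazyWalk (f : V → ℝ) (t : ℝ) (x : V) :
    ∑ y, f y * lazyWalk G t x y =
      (1 - t) * f x + t / deg G x * ∑ y ∈ G.neighborFinset x, f y := by
  have : ∀ y, lazyWalk G t x y =
      (if y = x then 1 - t else 0) + if y ∈ G.neighborFinset x then t / deg G x else 0 := by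
    intro y
    by_cases hy : y = x
    · subst hy; simp [lazyWalk]
    · simp [lazyWalk, hy]
  simp only [this, mul_add, mul_ite, mul_zero, sum_add_distrib, sum_ite_eq', mem_univ, if_true,
    ← sum_filter, filter_mem_eq_inter, univ_inter, ← sum_mul]
  ring

def matchingPlan (t : ℝ) (d : ℕ) (x x' : V) (M : V → V → Prop) [DecidableRel M] (y y' : V) :
    ℝ :=
  (if y = x ∧ y' = x' then 1 - t - t / d else 0) + if M y y' then t / d else 0

variable {t : ℝ} {d : ℕ} {x x' : V} {M : V → V → Prop} [DecidableRel M]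

lemma sum_matchingPlan_right (y : V) : ∑ y', matchingPlan t d x x' M y y' =
    (if y = x then 1 - t - t / d else 0) + #{y' | M y y'} * (t / d) := by
  simp [matchingPlan, sum_add_distrib, ite_and, sum_ite]

lemma sum_matchingPlan_left (y' : V) : ∑ y, matchingPlan t d x x' M y y' =
    (if y' = x' then 1 - t - t / d else 0) + #{y | M y y'} * (t / d) := by
  simp [matchingPlan, sum_add_distrib, ite_and, sum_ite]

theorem isCoupling_matchingPlan (hx : deg G x = d) (hx' : deg G x' = d) (ht₀ : 0 ≤ t)
    (ht : t + t / d ≤ 1)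
    (hrow : ∀ y, #{y' | M y y'} = if y = x ∨ G.Adj x y then 1 else 0)
    (hcol : ∀ y', #{y | M y y'} = if y' = x' ∨ G.Adj x' y' then 1 else 0) :
    IsCoupling (lazyWalk G t x) (lazyWalk G t x') (matchingPlan t d x x' M) := by
  refine ⟨fun y y' => ?_, fun y => ?_, fun y' => ?_⟩
  · unfold matchingPlan
    have : 0 ≤ t / d := by positivity
    split_ifs <;> linarith
  · rw [tsum_fintype, sum_matchingPlan_right, hrow, lazyWalk_eq_of_deg_eq hx]
    split_ifs <;> simp
  · rw [tsum_fintype, sum_matchingPlan_left, hcol, lazyWalk_eq_of_deg_eq hx']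
    split_ifs <;> simp

lemma transportCost_matchingPlan (ρ : V → V → ℝ) :
    transportCost ρ (matchingPlan t d x x' M) =
      (1 - t - t / d) * ρ x x' + t / d * ∑ p : V × V with M p.1 p.2, ρ p.1 p.2 := by
  simp [transportCost, matchingPlan, add_mul, sum_add_distrib, ite_and, mul_sum, sum_filter,
    Fintype.sum_prod_type]

end LazyWalk

section Cube

instance : DecidableRel cubeGraph.Adj := fun u v =>
  inferInstanceAs (Decidable (∃ i, u i ≠ v i ∧ ∀ j, j ≠ i → u j = v j))

lemma cubeGraph_adj_iff_hammingDist :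
    ∀ u v : Fin 3 → Bool, cubeGraph.Adj u v ↔ hammingDist u v = 1 := by
  decide

lemma cubeGraph_dist (u v : Fin 3 → Bool) : cubeGraph.dist u v = hammingDist u v :=
  SimpleGraph.dist_eq_hammingDist cubeGraph_adj_iff_hammingDist u v

lemma graphDist_cubeGraph (u v : Fin 3 → Bool) : graphDist cubeGraph u v = hammingDist u v := by
  rw [graphDist, cubeGraph_dist]

lemma deg_cubeGraph (x : Fin 3 → Bool) : deg cubeGraph x = 3 := by
  rw [deg_eq_degree]
  revert x
  decide

def cubeSquareMatching (x x' y y' : Fin 3 → Bool) : Prop :=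
  y = y' ∧ (y = x ∨ y = x') ∨
    cubeGraph.Adj x y ∧ cubeGraph.Adj y y' ∧ cubeGraph.Adj y' x' ∧ y ≠ x' ∧ y' ≠ x

instance (x x' : Fin 3 → Bool) : DecidableRel (cubeSquareMatching x x') := fun y y' => by
  unfold cubeSquareMatching
  infer_instance

lemma card_cubeSquareMatching_right : ∀ x x' : Fin 3 → Bool, cubeGraph.Adj x x' → ∀ y,
    #{y' | cubeSquareMatching x x' y y'} = if y = x ∨ cubeGraph.Adj x y then 1 else 0 := by
  decide

lemma card_cubeSquareMatching_left : ∀ x x' : Fin 3 → Bool, cubeGraph.Adj x x' → ∀ y',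
    #{y | cubeSquareMatching x x' y y'} = if y' = x' ∨ cubeGraph.Adj x' y' then 1 else 0 := by
  decide

lemma sum_hammingDist_cubeSquareMatching : ∀ x x' : Fin 3 → Bool, cubeGraph.Adj x x' →
    ∑ p : (Fin 3 → Bool) × (Fin 3 → Bool) with cubeSquareMatching x x' p.1 p.2,
      hammingDist p.1 p.2 = 2 := by
  decide

lemma sum_neighborFinset_hammingDist_self : ∀ x : Fin 3 → Bool,
    ∑ y ∈ cubeGraph.neighborFinset x, hammingDist y x = 3 := by
  decide

lemma sum_neighborFinset_hammingDist_of_adj : ∀ x x' : Fin 3 → Bool, cubeGraph.Adj x x' →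
    ∑ y ∈ cubeGraph.neighborFinset x, hammingDist y x' = 4 := by
  decide

theorem W1_lazyWalk_cubeGraph {x x' : Fin 3 → Bool} (h : cubeGraph.Adj x x') {t : ℝ}
    (ht₀ : 0 ≤ t) (ht : t ≤ 3 / 4) :
    W1 (graphDist cubeGraph) (lazyWalk cubeGraph t x) (lazyWalk cubeGraph t x') =
      1 - 2 * t / 3 := by
  have hxx' : hammingDist x x' = 1 := (cubeGraph_adj_iff_hammingDist x x').1 h
  have hcost : transportCost (graphDist cubeGraph)
      (matchingPlan t 3 x x' (cubeSquareMatching x x')) = 1 - 2 * t / 3 := by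
    simp only [transportCost_matchingPlan, graphDist_cubeGraph, ← Nat.cast_sum,
      sum_hammingDist_cubeSquareMatching x x' h, hxx']
    push_cast
    ring
  rw [← hcost]
  refine W1_eq_transportCost (f := fun y => (hammingDist y x' : ℝ))
    (isCoupling_matchingPlan (deg_cubeGraph x) (deg_cubeGraph x') ht₀ (by push_cast; linarith)
      (card_cubeSquareMatching_right x x' h) (card_cubeSquareMatching_left x x' h))
    (fun y y' => ?_) ?_
  · rw [graphDist_cubeGraph, sub_le_iff_le_add, ← Nat.cast_add, Nat.cast_le]
    exact hammingDist_triangle y y' x'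
  · simp only [hcost, sum_mul_lazyWalk, deg_cubeGraph, ← Nat.cast_sum,
      sum_neighborFinset_hammingDist_of_adj x x' h, sum_neighborFinset_hammingDist_self, hxx',
      hammingDist_self]
    push_cast
    ring

theorem kappa_cubeGraph {x x' : Fin 3 → Bool} (h : cubeGraph.Adj x x') {t : ℝ}
    (ht₀ : 0 ≤ t) (ht : t ≤ 3 / 4) : kappa cubeGraph t x x' = 2 * t / 3 := by
  rw [kappa, W1_lazyWalk_cubeGraph h ht₀ ht, graphDist_cubeGraph,
    (cubeGraph_adj_iff_hammingDist x x').1 h]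
  ring

end Cube

/-- on the cube graph, the Ollivier–Ricci curvature of every edge
equals `2/3`, sharp for the discrete Myers theorem: the diameter equals `3`. -/
theorem cube_ric_and_diameter :
    (∀ x x', cubeGraph.Adj x x' →
      Filter.Tendsto (fun t => kappa cubeGraph t x x' / t)
        (nhdsWithin 0 (Set.Ioi 0)) (nhds (2/3))) ∧
    (∃ x y, cubeGraph.dist x y = 3) ∧ (∀ x y, cubeGraph.dist x y ≤ 3) := by
  refine ⟨fun x x' h => ?_, ⟨fun _ => false, fun _ => true, ?_⟩, fun x y => ?_⟩
  · refine tendsto_const_nhds.congr' ?_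
    filter_upwards [Ioo_mem_nhdsGT (by norm_num : (0 : ℝ) < 3 / 4)] with t ht
    rw [kappa_cubeGraph h ht.1.le ht.2.le]
    field_simp [ht.1.ne']
  · rw [cubeGraph_dist]
    decide
  · rw [cubeGraph_dist]
    exact hammingDist_le_card_fintype.trans_eq (Fintype.card_fin 3)
end
end
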